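/- Let u ∈ U, τ ∈ (0,1), v ∈ B(0,ρ_max), and let u^ε be the perturbed control equal to v on (τ−ε, τ] and to u elsewhere, with x and x^ε the nominal and perturbed hybrid trajectories under a fixed observation sequence (y₁,…,y_T). Then there exist finite positive constants β′₁(x₀) and, for each i ∈ {2,…,T}, a finite set 𝒧′_i of sequences of non-negative integers with constants β′_i^{(j₁,…,j_{i−1})}(x₀) (independent of ε, u^ε, and the observations), such that for all ε ∈ [0,τ]: |c(x₁^ε(t), u^ε(t)) − c(x₁(t), u(t))| ≤ ε β′₁(x₀) for all t ∈ (τ, 1], and for each i ∈ {2,…,T} and all t ∈ [i−1, i], |c(x_i^ε(t), u^ε(t)) − c(x_i(t), u(t))| ≤ ε Σ_{(j₁,…,j_{i−1}) ∈ 𝒧′_i} β′_i^{(j₁,…,j_{i−1})}(x₀) ∏_{m=1}^{i−1} ‖y_m‖₂^{j_m}. -/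

import Mathlib

/-!
Along each mode the flow is `K₁`-Lipschitz in the state and the control, so Grönwall's
inequality bounds the modes of both trajectories, and their distance by the `L¹` distance
`2 ρmax ε` of the two controls. At a switching time the jump map has polynomial growth and a
polynomially bounded derivative, so by induction over the modes both the states and their
distance grow at most polynomially in `∏ (1 + ‖y j‖)` over the observations seen so far. After
`τ` the two controls agree, and the mean value theorem for `c (·, u t)`, whose derivative is
polynomially bounded as well, turns the state distance into a cost distance. Expanding
`β ∏ (1 + ‖y j‖) ^ N` into monomials gives the list of coefficients.
-/

open Set MeasureTheory Filter Topology

noncomputable section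

open scoped Classical

abbrev EucSp (n : ℕ) := EuclideanSpace ℝ (Fin n)

/-- A function is piecewise continuous on `s` if it is continuous within `s` outside of a
finite set of points. -/
def PiecewiseContinuousOn {E : Type*} [TopologicalSpace E] (u : ℝ → E) (s : Set ℝ) : Prop :=
  ∃ D : Finset ℝ, ∀ t ∈ s, t ∉ D → ContinuousWithinAt u s t

/-- Admissible controls: piecewise continuous functions on `[0, T]` with values in the
closed ball of radius `ρmax`. -/
def AdmissibleCtrl {m : ℕ} (T ρmax : ℝ) (u : ℝ → EucSp m) : Prop :=
  PiecewiseContinuousOn u (Set.Icc 0 T) ∧ ∀ t ∈ Set.Icc (0 : ℝ) T, ‖u t‖ ≤ ρmax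

/-- `x` is a (Carathéodory) solution of `ẋ = f(x, u(t))` on `[a, b]`, in integral form. -/
def IsSolOn {nx m : ℕ} (f : EucSp nx → EucSp m → EucSp nx) (u : ℝ → EucSp m)
    (a b : ℝ) (x : ℝ → EucSp nx) : Prop :=
  ContinuousOn x (Set.Icc a b) ∧
    ∀ t ∈ Set.Icc a b, x t = x a + ∫ s in a..t, f (x s) (u s)

/-- The modes `x i : [i-1, i] → ℝ^{n_x}` of the hybrid system with time-driven switching:
`x 1 0 = x₀`, each mode solves `ẋ = f(x, u)` on `[i-1, i]`, and modes are linked by the jump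
map `g` with observation `y i`. -/
def HybridModes {nx ny m : ℕ} (T : ℕ) (f : EucSp nx → EucSp m → EucSp nx)
    (g : EucSp nx → EucSp ny → EucSp nx) (u : ℝ → EucSp m) (y : ℕ → EucSp ny)
    (x₀ : EucSp nx) (x : ℕ → ℝ → EucSp nx) : Prop :=
  x 1 0 = x₀ ∧
    (∀ i : ℕ, 1 ≤ i → i ≤ T → IsSolOn f u ((i : ℝ) - 1) (i : ℝ) (x i)) ∧
    (∀ i : ℕ, 1 ≤ i → i + 1 ≤ T → x (i + 1) (i : ℝ) = g (x i (i : ℝ)) (y i))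

/-- The hybrid trajectory `X` built from the modes: `X t = x i t` on `[i-1, i)` and
`X T = g (x T T) (y T)`. -/
def IsHybridTraj {nx ny : ℕ} (T : ℕ) (g : EucSp nx → EucSp ny → EucSp nx)
    (y : ℕ → EucSp ny) (x : ℕ → ℝ → EucSp nx) (X : ℝ → EucSp nx) : Prop :=
  (∀ i : ℕ, 1 ≤ i → i ≤ T → ∀ t ∈ Set.Ico ((i : ℝ) - 1) (i : ℝ), X t = x i t) ∧
    X (T : ℝ) = g (x T (T : ℝ)) (y T)

/-- The perturbed control: equal to `v` on `(τ - ε, τ]` and to `u` elsewhere. -/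
def perturb {m : ℕ} (u : ℝ → EucSp m) (τ : ℝ) (v : EucSp m) (ε : ℝ) : ℝ → EucSp m :=
  fun t => if τ - ε < t ∧ t ≤ τ then v else u t

theorem PiecewiseContinuousOn.aestronglyMeasurable {E : Type*} [NormedAddCommGroup E]
    {u : ℝ → E} {s : Set ℝ} (hu : PiecewiseContinuousOn u s) (hs : MeasurableSet s) :
    AEStronglyMeasurable u (volume.restrict s) := by
  obtain ⟨D, hD⟩ := hu
  have hcont : ContinuousOn u (s \ D) := fun t ht => (hD t ht.1 ht.2).mono sdiff_subset
  have hnull : s \ (D : Set ℝ) =ᵐ[volume] s := sdiff_ae_eq_self.2 <|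
    measure_mono_null inter_subset_right (D.finite_toSet.countable.measure_zero _)
  exact (hcont.aestronglyMeasurable (hs.diff D.finite_toSet.measurableSet)).mono_measure
    (Measure.restrict_congr_set hnull).ge

theorem intervalIntegrable_of_norm_le {E : Type*} [NormedAddCommGroup E] {h : ℝ → E}
    {a b C : ℝ} (hab : a ≤ b) (hm : AEStronglyMeasurable h (volume.restrict (Icc a b)))
    (hC : ∀ s ∈ Icc a b, ‖h s‖ ≤ C) : IntervalIntegrable h volume a b :=
  (intervalIntegrable_iff_integrableOn_Icc_of_le hab).2 <|
    IntegrableOn.of_bound measure_Icc_lt_top hm C ((ae_restrict_iff' measurableSet_Icc).2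
      (ae_of_all _ hC))

theorem intervalIntegrable_comp_of_norm_le {E U F : Type*} [NormedAddCommGroup E]
    [NormedAddCommGroup U] [ProperSpace U] [NormedAddCommGroup F] {f : E → U → F}
    (hf : Continuous fun p : E × U => f p.1 p.2) {x : ℝ → E} {u : ℝ → U} {a b ρ : ℝ}
    (hab : a ≤ b) (hx : ContinuousOn x (Icc a b))
    (hum : AEStronglyMeasurable u (volume.restrict (Icc a b)))
    (hub : ∀ s ∈ Icc a b, ‖u s‖ ≤ ρ) :
    IntervalIntegrable (fun s => f (x s) (u s)) volume a b := by
  obtain ⟨C, hC⟩ := ((isCompact_Icc.image_of_continuousOn hx).prod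
    (isCompact_closedBall (0 : U) ρ)).exists_bound_of_continuousOn hf.continuousOn
  refine intervalIntegrable_of_norm_le hab
    (hf.comp_aestronglyMeasurable ((hx.aestronglyMeasurable measurableSet_Icc).prodMk hum))
    fun s hs => hC (x s, u s) ⟨mem_image_of_mem x hs, mem_closedBall_zero_iff.2 (hub s hs)⟩

theorem le_mul_exp_of_le_add_mul_integral {φ : ℝ → ℝ} {a b A K : ℝ}
    (hφ : ContinuousOn φ (Icc a b)) (hK : 0 ≤ K)
    (h : ∀ t ∈ Icc a b, φ t ≤ A + K * ∫ s in a..t, φ s) :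
    ∀ t ∈ Icc a b, φ t ≤ A * Real.exp (K * (t - a)) := by
  intro t ht
  have hab : a ≤ b := ht.1.trans ht.2
  -- a continuous extension of `φ` to `ℝ`, so that `G` below is differentiable everywhere
  set ψ : ℝ → ℝ := IccExtend hab ((Icc a b).domRestrict φ)
  have hψ : Continuous ψ := (continuousOn_iff_continuous_domRestrict.1 hφ).Icc_extend'
  have hψφ : ∀ s ∈ Icc a b, ψ s = φ s := fun s hs => IccExtend_of_mem hab _ hs
  have hint : ∀ s ∈ Icc a b, ∫ r in a..s, ψ r = ∫ r in a..s, φ r := fun s hs =>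
    intervalIntegral.integral_congr fun r hr => by
      rw [uIcc_of_le hs.1] at hr
      exact hψφ r ⟨hr.1, hr.2.trans hs.2⟩
  set G : ℝ → ℝ := fun s => A + K * ∫ r in a..s, ψ r
  have hG : ∀ s, HasDerivAt G (K * ψ s) s := fun s =>
    ((hψ.integral_hasStrictDerivAt a s).hasDerivAt.const_mul K).const_add A
  have hφG : ∀ s ∈ Icc a b, φ s ≤ G s := fun s hs => by
    simpa only [G, hint s hs] using h s hs
  have hGbound := le_gronwallBound_of_liminf_deriv_right_le (f' := fun s => K * ψ s) (δ := A)
    (fun s _ => (hG s).continuousAt.continuousWithinAt)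
    (fun s _ r hr => (hG s).hasDerivWithinAt.liminf_right_slope_le hr)
    (by simp [G]) (fun s hs => by
      rw [add_zero, hψφ s (Ico_subset_Icc_self hs)]
      exact mul_le_mul_of_nonneg_left (hφG s (Ico_subset_Icc_self hs)) hK) t ht
  rw [gronwallBound_ε0] at hGbound
  exact (hφG t ht).trans hGbound

theorem norm_le_of_eq_add_integral {E : Type*} [NormedAddCommGroup E] [NormedSpace ℝ E]
    {z F : ℝ → E} {γ : ℝ → ℝ} {a b K η : ℝ} (hK : 0 ≤ K) (hz : ContinuousOn z (Icc a b))
    (heq : ∀ t ∈ Icc a b, z t = z a + ∫ s in a..t, F s)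
    (hF : ∀ s ∈ Icc a b, ‖F s‖ ≤ K * ‖z s‖ + γ s) (hγ : IntervalIntegrable γ volume a b)
    (hη : ∀ t ∈ Icc a b, ∫ s in a..t, γ s ≤ η) :
    ∀ t ∈ Icc a b, ‖z t‖ ≤ (‖z a‖ + η) * Real.exp (K * (b - a)) := by
  have hint : ∀ t ∈ Icc a b, ‖z t‖ ≤ (‖z a‖ + η) + K * ∫ s in a..t, ‖z s‖ := by
    intro t ht
    have hsub : Icc a t ⊆ Icc a b := Icc_subset_Icc_right ht.2
    have hzt : IntervalIntegrable (fun s => K * ‖z s‖) volume a t :=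
      ((hz.mono hsub).norm.const_smul K).intervalIntegrable_of_Icc ht.1
    have hγt : IntervalIntegrable γ volume a t :=
      hγ.mono_set (by rw [uIcc_of_le ht.1, uIcc_of_le (ht.1.trans ht.2)]; exact hsub)
    have hFt : ‖∫ s in a..t, F s‖ ≤ ∫ s in a..t, (K * ‖z s‖ + γ s) :=
      intervalIntegral.norm_integral_le_of_norm_le ht.1
        (ae_of_all _ fun s hs => hF s (hsub (Ioc_subset_Icc_self hs)))
        (hzt.add hγt)
    rw [intervalIntegral.integral_add hzt hγt, intervalIntegral.integral_const_mul] at hFt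
    calc ‖z t‖ ≤ ‖z a‖ + ‖∫ s in a..t, F s‖ := heq t ht ▸ norm_add_le _ _
      _ ≤ (‖z a‖ + η) + K * ∫ s in a..t, ‖z s‖ := by linarith [hη t ht]
  intro t ht
  have hη0 : 0 ≤ η := by simpa using hη a (left_mem_Icc.2 (ht.1.trans ht.2))
  calc ‖z t‖ ≤ (‖z a‖ + η) * Real.exp (K * (t - a)) :=
        le_mul_exp_of_le_add_mul_integral hz.norm hK hint t ht
    _ ≤ (‖z a‖ + η) * Real.exp (K * (b - a)) := by gcongr; exact ht.2

section Flow

variable {nx m : ℕ} {f : EucSp nx → EucSp m → EucSp nx} {K ρ a b : ℝ} {u u' : ℝ → EucSp m}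
  {x x' : ℝ → EucSp nx}

theorem IsSolOn.norm_le (hK : 0 ≤ K) (hρ : 0 ≤ ρ)
    (hLip : ∀ (x' x'' : EucSp nx) (u' u'' : EucSp m), ‖u'‖ ≤ ρ → ‖u''‖ ≤ ρ →
      ‖f x' u' - f x'' u''‖ ≤ K * (‖x' - x''‖ + ‖u' - u''‖))
    (hx : IsSolOn f u a b x) (hub : ∀ s ∈ Icc a b, ‖u s‖ ≤ ρ) :
    ∀ t ∈ Icc a b, ‖x t‖ ≤ (‖x a‖ + (‖f 0 0‖ + K * ρ) * (b - a)) * Real.exp (K * (b - a)) := by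
  refine norm_le_of_eq_add_integral (γ := fun _ => ‖f 0 0‖ + K * ρ) hK hx.1 hx.2
    (fun s hs => ?_) intervalIntegrable_const fun t ht => ?_
  · have h0 := hLip (x s) 0 (u s) 0 (hub s hs) (by simpa using hρ)
    rw [sub_zero, sub_zero] at h0
    have hu : K * ‖u s‖ ≤ K * ρ := mul_le_mul_of_nonneg_left (hub s hs) hK
    linarith [norm_le_insert' (f (x s) (u s)) (f 0 0)]
  · rw [intervalIntegral.integral_const, smul_eq_mul, mul_comm]
    exact mul_le_mul_of_nonneg_left (by linarith [ht.2]) (by positivity)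

theorem IsSolOn.norm_sub_le {η : ℝ} (hK : 0 ≤ K)
    (hf : Continuous fun p : EucSp nx × EucSp m => f p.1 p.2)
    (hLip : ∀ (x' x'' : EucSp nx) (u' u'' : EucSp m), ‖u'‖ ≤ ρ → ‖u''‖ ≤ ρ →
      ‖f x' u' - f x'' u''‖ ≤ K * (‖x' - x''‖ + ‖u' - u''‖))
    (hx : IsSolOn f u a b x) (hx' : IsSolOn f u' a b x')
    (hum : AEStronglyMeasurable u (volume.restrict (Icc a b)))
    (hum' : AEStronglyMeasurable u' (volume.restrict (Icc a b)))
    (hub : ∀ s ∈ Icc a b, ‖u s‖ ≤ ρ) (hub' : ∀ s ∈ Icc a b, ‖u' s‖ ≤ ρ)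
    (hη : ∀ t ∈ Icc a b, ∫ s in a..t, ‖u' s - u s‖ ≤ η) :
    ∀ t ∈ Icc a b, ‖x' t - x t‖ ≤ (‖x' a - x a‖ + K * η) * Real.exp (K * (b - a)) := by
  intro t ht
  have hab : a ≤ b := ht.1.trans ht.2
  have hI := intervalIntegrable_comp_of_norm_le hf hab hx.1 hum hub
  have hI' := intervalIntegrable_comp_of_norm_le hf hab hx'.1 hum' hub'
  have hsub : ∀ {t}, t ∈ Icc a b → uIcc a t ⊆ uIcc a b := fun ht => by
    rw [uIcc_of_le ht.1, uIcc_of_le hab]; exact Icc_subset_Icc_right ht.2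
  have hdu : IntervalIntegrable (fun s => ‖u' s - u s‖) volume a b :=
    intervalIntegrable_of_norm_le (C := ρ + ρ) hab (hum'.sub hum).norm fun s hs => by
      rw [norm_norm]; exact (_root_.norm_sub_le _ _).trans (add_le_add (hub' s hs) (hub s hs))
  refine norm_le_of_eq_add_integral (z := x' - x)
    (F := fun s => f (x' s) (u' s) - f (x s) (u s)) hK (hx'.1.sub hx.1) (fun t ht => ?_)
    (fun s hs => ?_) (hdu.const_mul K) (fun t ht => ?_) t ht
  · rw [intervalIntegral.integral_sub (hI'.mono_set (hsub ht)) (hI.mono_set (hsub ht)),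
      Pi.sub_apply, Pi.sub_apply, hx'.2 t ht, hx.2 t ht]
    abel
  · simpa only [Pi.sub_apply, mul_add] using hLip _ _ _ _ (hub' s hs) (hub s hs)
  · rw [intervalIntegral.integral_const_mul]
    exact mul_le_mul_of_nonneg_left (hη t ht) hK

end Flow

section Perturb

variable {m : ℕ} {u : ℝ → EucSp m} {τ ε ρ : ℝ} {v : EucSp m}

theorem perturb_eq_piecewise : perturb u τ v ε = (Ioc (τ - ε) τ).piecewise (fun _ => v) u := rfl

theorem perturb_of_lt {t : ℝ} (ht : τ < t) : perturb u τ v ε t = u t :=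
  if_neg fun h => (h.2.trans_lt ht).false

theorem norm_perturb_le {t : ℝ} (hu : ‖u t‖ ≤ ρ) (hv : ‖v‖ ≤ ρ) : ‖perturb u τ v ε t‖ ≤ ρ := by
  unfold perturb; split_ifs <;> assumption

theorem MeasureTheory.AEStronglyMeasurable.perturb {s : Set ℝ}
    (hu : AEStronglyMeasurable u (volume.restrict s)) :
    AEStronglyMeasurable (perturb u τ v ε) (volume.restrict s) := by
  rw [perturb_eq_piecewise]
  exact aestronglyMeasurable_const.piecewise measurableSet_Ioc
    (hu.mono_measure Measure.restrict_le_self)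

theorem integral_norm_perturb_sub_le {a t : ℝ} (hε : 0 ≤ ε) (hv : ‖v‖ ≤ ρ) (hat : a ≤ t)
    (hu : ∀ s ∈ Icc a t, ‖u s‖ ≤ ρ) :
    ∫ s in a..t, ‖perturb u τ v ε s - u s‖ ≤ 2 * ρ * ε := by
  set J := Ioc (τ - ε) τ
  have hρ : 0 ≤ ρ := (norm_nonneg v).trans hv
  have hJ : Integrable (J.indicator fun _ => 2 * ρ) :=
    (integrableOn_const measure_Ioc_lt_top.ne).integrable_indicator measurableSet_Ioc
  have hle : ∀ s ∈ Ioc a t, ‖‖perturb u τ v ε s - u s‖‖ ≤ J.indicator (fun _ => 2 * ρ) s := by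
    intro s hs
    rw [norm_norm, perturb_eq_piecewise]
    by_cases hsJ : s ∈ J
    · rw [piecewise_eq_of_mem _ _ _ hsJ, indicator_of_mem hsJ]
      linarith [norm_sub_le v (u s), hu s (Ioc_subset_Icc_self hs)]
    · rw [piecewise_eq_of_notMem _ _ _ hsJ, indicator_of_notMem hsJ, sub_self, norm_zero]
  calc ∫ s in a..t, ‖perturb u τ v ε s - u s‖
      ≤ ∫ s in a..t, J.indicator (fun _ => 2 * ρ) s :=
        (Real.le_norm_self _).trans <| intervalIntegral.norm_integral_le_of_norm_le hat
          (ae_of_all _ hle) hJ.intervalIntegrable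
    _ ≤ ∫ s, J.indicator (fun _ => 2 * ρ) s := by
        rw [intervalIntegral.integral_of_le hat]
        exact setIntegral_le_integral hJ (ae_of_all _ fun s => indicator_nonneg
          (fun _ _ => by positivity) s)
    _ = 2 * ρ * ε := by
        rw [integral_indicator_const _ measurableSet_Ioc, Real.volume_real_Ioc_of_le (by linarith),
          smul_eq_mul]
        ring

end Perturb

theorem exists_list_mul_prod_one_add_pow_le (s : Finset ℕ) {β : ℝ} (hβ : 0 < β) (N : ℕ) :
    ∃ B : List ((ℕ → ℕ) × ℝ), (∀ p ∈ B, 0 < p.2) ∧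
      ∀ w : ℕ → ℝ, (∀ j ∈ s, 0 ≤ w j) →
        β * (∏ j ∈ s, (1 + w j)) ^ N ≤ (B.map fun p => p.2 * ∏ j ∈ s, w j ^ p.1 j).sum := by
  -- `(1 + w)^N ≤ 2^(N-1) (1 + w^N)`, and expanding `∏ (1 + w j ^ N)` gives one monomial per subset
  refine ⟨s.powerset.toList.map fun S => (fun j => if j ∈ S then N else 0,
    β * 2 ^ ((N - 1) * s.card)), by simp [hβ], fun w hw => ?_⟩
  have hmono : ∀ S ∈ s.powerset, ∏ j ∈ s, w j ^ (if j ∈ S then N else 0) = ∏ j ∈ S, w j ^ N :=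
    fun S hS => by
      simp only [pow_ite, pow_zero, Finset.prod_ite_mem,
        Finset.inter_eq_right.2 (Finset.mem_powerset.1 hS)]
  rw [List.map_map, Finset.sum_map_toList]
  simp only [Function.comp_apply]
  rw [Finset.sum_congr rfl fun S hS => by rw [hmono S hS], ← Finset.mul_sum, mul_assoc]
  refine mul_le_mul_of_nonneg_left ?_ hβ.le
  calc (∏ j ∈ s, (1 + w j)) ^ N = ∏ j ∈ s, (1 + w j) ^ N := (Finset.prod_pow _ _ _).symm
    _ ≤ ∏ j ∈ s, (2 ^ (N - 1) * (1 + w j ^ N)) := Finset.prod_le_prod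
        (fun j hj => pow_nonneg (by linarith [hw j hj]) _)
        (fun j hj => by simpa using add_pow_le zero_le_one (hw j hj) N)
    _ = 2 ^ ((N - 1) * s.card) * ∑ S ∈ s.powerset, ∏ j ∈ S, w j ^ N := by
        rw [Finset.prod_mul_distrib, Finset.prod_const, ← pow_mul, Finset.prod_one_add]

theorem norm_image_sub_le_of_norm_fderiv_le_of_norm_le {E F : Type*} [NormedAddCommGroup E]
    [NormedSpace ℝ E] [NormedAddCommGroup F] [NormedSpace ℝ F] {φ : E → F} {R C : ℝ}
    (hφ : Differentiable ℝ φ) (hC : ∀ z : E, ‖z‖ ≤ R → ‖fderiv ℝ φ z‖ ≤ C) {z₁ z₂ : E}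
    (h₁ : ‖z₁‖ ≤ R) (h₂ : ‖z₂‖ ≤ R) : ‖φ z₁ - φ z₂‖ ≤ C * ‖z₁ - z₂‖ := by
  simp only [← mem_closedBall_zero_iff] at h₁ h₂
  exact (convex_closedBall 0 R).norm_image_sub_le_of_norm_fderiv_le (fun z _ => hφ z)
    (fun z hz => hC z (mem_closedBall_zero_iff.1 hz)) h₂ h₁

theorem add_mul_pow_add_le_mul_pow_mul_one_add_pow {K₂ K₃ K₄ K₅ r R s : ℝ} {L₁ L₂ : ℕ}
    (hK₂ : 0 ≤ K₂) (hK₃ : 0 ≤ K₃) (hK₄ : 0 ≤ K₄) (hK₅ : 0 ≤ K₅) (hr : 0 ≤ r) (hrR : r ≤ R)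
    (hR : 1 ≤ R) (hs : 0 ≤ s) :
    K₂ + K₃ * r ^ L₁ + K₄ * s ^ L₂ + K₅ * r ^ L₁ * s ^ L₂ ≤
      (K₂ + K₃ + K₄ + K₅) * R ^ L₁ * (1 + s) ^ L₂ := by
  have hrR' : r ^ L₁ ≤ R ^ L₁ := pow_le_pow_left₀ hr hrR L₁
  have hs' : s ^ L₂ ≤ (1 + s) ^ L₂ := pow_le_pow_left₀ hs (by linarith) L₂
  have hR' : 1 ≤ R ^ L₁ := one_le_pow₀ hR
  have hs1 : 1 ≤ (1 + s) ^ L₂ := one_le_pow₀ (by linarith)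
  have h0 : 0 ≤ r ^ L₁ := pow_nonneg hr L₁
  have h0' : 0 ≤ s ^ L₂ := pow_nonneg hs L₂
  have hP : 1 ≤ R ^ L₁ * (1 + s) ^ L₂ := one_le_mul_of_one_le_of_one_le hR' hs1
  have h3 : r ^ L₁ ≤ R ^ L₁ * (1 + s) ^ L₂ := hrR'.trans (le_mul_of_one_le_right (by linarith) hs1)
  have h4 : s ^ L₂ ≤ R ^ L₁ * (1 + s) ^ L₂ := hs'.trans (le_mul_of_one_le_left (by linarith) hR')
  have h5 : r ^ L₁ * s ^ L₂ ≤ R ^ L₁ * (1 + s) ^ L₂ := mul_le_mul hrR' hs' h0' (by linarith)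
  have := mul_le_mul_of_nonneg_left hP hK₂
  have := mul_le_mul_of_nonneg_left h3 hK₃
  have := mul_le_mul_of_nonneg_left h4 hK₄
  have := mul_le_mul_of_nonneg_left h5 hK₅
  nlinarith

theorem mul_pow_add_le_add_mul_pow {A B W : ℝ} {k n : ℕ} (hA : 0 ≤ A) (hB : 0 ≤ B)
    (hW : 1 ≤ W) (hkn : k ≤ n) : A * W ^ k + B ≤ (A + B) * W ^ n := by
  have h1 : W ^ k ≤ W ^ n := pow_le_pow_right₀ hW hkn
  have h2 : 1 ≤ W ^ n := one_le_pow₀ hW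
  nlinarith

section ObsWeight

variable {ny : ℕ} (y : ℕ → EucSp ny)

def obsWeight (i : ℕ) : ℝ := ∏ j ∈ Finset.Ico 1 i, (1 + ‖y j‖)

theorem one_le_obsWeight (i : ℕ) : 1 ≤ obsWeight y i :=
  Finset.one_le_prod fun j _ => le_add_of_nonneg_right (norm_nonneg (y j))

theorem obsWeight_nonneg (i : ℕ) : 0 ≤ obsWeight y i :=
  zero_le_one.trans (one_le_obsWeight y i)

theorem obsWeight_succ {i : ℕ} (hi : 1 ≤ i) :
    obsWeight y (i + 1) = obsWeight y i * (1 + ‖y i‖) :=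
  Finset.prod_Ico_succ_top hi _

theorem obsWeight_one : obsWeight y 1 = 1 := by
  simp [obsWeight]

theorem obsWeight_le_succ {i : ℕ} (hi : 1 ≤ i) :
    obsWeight y i ≤ obsWeight y (i + 1) := by
  rw [obsWeight_succ y hi]
  exact le_mul_of_one_le_right (obsWeight_nonneg y i)
    (le_add_of_nonneg_right (norm_nonneg _))

theorem one_add_norm_le_obsWeight_succ {i : ℕ} (hi : 1 ≤ i) :
    1 + ‖y i‖ ≤ obsWeight y (i + 1) := by
  rw [obsWeight_succ y hi]
  exact le_mul_of_one_le_left (by positivity) (one_le_obsWeight y i)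

theorem jump_bound_le_obsWeight_succ {i : ℕ} (hi : 1 ≤ i)
    {Kg C : ℝ} (hKg : 0 ≤ Kg) (hC : 0 ≤ C) (N L₁ L₂ : ℕ) :
    Kg * (C * obsWeight y i ^ N) ^ L₁ * (1 + ‖y i‖) ^ L₂ ≤
      Kg * C ^ L₁ * obsWeight y (i + 1) ^ (N * L₁ + L₂) := by
  have hW := obsWeight_nonneg y i
  calc Kg * (C * obsWeight y i ^ N) ^ L₁ * (1 + ‖y i‖) ^ L₂
      = Kg * C ^ L₁ * (obsWeight y i ^ (N * L₁) * (1 + ‖y i‖) ^ L₂) := by ring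
    _ ≤ Kg * C ^ L₁ * (obsWeight y (i + 1) ^ (N * L₁) * obsWeight y (i + 1) ^ L₂) := by
        gcongr
        exacts [pow_nonneg (obsWeight_nonneg y _) _, obsWeight_le_succ y hi,
          one_add_norm_le_obsWeight_succ y hi]
    _ = Kg * C ^ L₁ * obsWeight y (i + 1) ^ (N * L₁ + L₂) := by rw [pow_add]

end ObsWeight

section Hybrid

variable {nx ny m T : ℕ} {f : EucSp nx → EucSp m → EucSp nx}
  {g : EucSp nx → EucSp ny → EucSp nx} {K ρ Kg : ℝ} {L₁ L₂ : ℕ} {x₀ : EucSp nx}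
  {u u' : ℝ → EucSp m} {y : ℕ → EucSp ny} {x x' : ℕ → ℝ → EucSp nx} {i : ℕ}

theorem Icc_sub_one_subset_Icc_zero (hi : 1 ≤ i) (hiT : i ≤ T) :
    Icc ((i : ℝ) - 1) i ⊆ Icc 0 (T : ℝ) :=
  Icc_subset_Icc (by simp [Nat.one_le_cast.2 hi]) (Nat.cast_le.2 hiT)

theorem HybridModes.norm_le_on_mode (hK : 0 ≤ K) (hρ : 0 ≤ ρ)
    (hLip : ∀ (x' x'' : EucSp nx) (u' u'' : EucSp m), ‖u'‖ ≤ ρ → ‖u''‖ ≤ ρ →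
      ‖f x' u' - f x'' u''‖ ≤ K * (‖x' - x''‖ + ‖u' - u''‖))
    (hx : HybridModes T f g u y x₀ x) (hub : ∀ s ∈ Icc (0 : ℝ) T, ‖u s‖ ≤ ρ)
    (hi : 1 ≤ i) (hiT : i ≤ T) :
    ∀ t ∈ Icc ((i : ℝ) - 1) i,
      ‖x i t‖ ≤ (‖x i ((i : ℝ) - 1)‖ + (‖f 0 0‖ + K * ρ)) * Real.exp K := by
  simpa only [sub_sub_cancel, mul_one] using (hx.2.1 i hi hiT).norm_le hK hρ hLip
    fun s hs => hub s (Icc_sub_one_subset_Icc_zero hi hiT hs)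

theorem HybridModes.norm_sub_le_on_mode {δ : ℝ} (hK : 0 ≤ K)
    (hf : Continuous fun p : EucSp nx × EucSp m => f p.1 p.2)
    (hLip : ∀ (x' x'' : EucSp nx) (u' u'' : EucSp m), ‖u'‖ ≤ ρ → ‖u''‖ ≤ ρ →
      ‖f x' u' - f x'' u''‖ ≤ K * (‖x' - x''‖ + ‖u' - u''‖))
    (hx : HybridModes T f g u y x₀ x) (hx' : HybridModes T f g u' y x₀ x')
    (hum : AEStronglyMeasurable u (volume.restrict (Icc 0 (T : ℝ))))
    (hum' : AEStronglyMeasurable u' (volume.restrict (Icc 0 (T : ℝ))))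
    (hub : ∀ s ∈ Icc (0 : ℝ) T, ‖u s‖ ≤ ρ) (hub' : ∀ s ∈ Icc (0 : ℝ) T, ‖u' s‖ ≤ ρ)
    (hδ : ∀ a t : ℝ, 0 ≤ a → a ≤ t → t ≤ T → ∫ s in a..t, ‖u' s - u s‖ ≤ δ)
    (hi : 1 ≤ i) (hiT : i ≤ T) :
    ∀ t ∈ Icc ((i : ℝ) - 1) i, ‖x' i t - x i t‖ ≤
      (‖x' i ((i : ℝ) - 1) - x i ((i : ℝ) - 1)‖ + K * δ) * Real.exp K := by
  have hsub := Icc_sub_one_subset_Icc_zero hi hiT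
  have hle : volume.restrict (Icc ((i : ℝ) - 1) i) ≤ volume.restrict (Icc 0 (T : ℝ)) :=
    Measure.restrict_mono hsub le_rfl
  simpa only [sub_sub_cancel, mul_one] using
    (hx.2.1 i hi hiT).norm_sub_le hK hf hLip (hx'.2.1 i hi hiT) (hum.mono_measure hle)
      (hum'.mono_measure hle)
      (fun s hs => hub s (hsub hs)) (fun s hs => hub' s (hsub hs))
      fun t ht => hδ _ t (hsub (left_mem_Icc.2 (ht.1.trans ht.2))).1 ht.1 (hsub ⟨ht.1, ht.2⟩).2

theorem exists_hybridModes_norm_le (hK : 0 ≤ K) (hρ : 0 ≤ ρ)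
    (hLip : ∀ (x' x'' : EucSp nx) (u' u'' : EucSp m), ‖u'‖ ≤ ρ → ‖u''‖ ≤ ρ →
      ‖f x' u' - f x'' u''‖ ≤ K * (‖x' - x''‖ + ‖u' - u''‖))
    (hKg : 0 ≤ Kg) (hg : ∀ (z : EucSp nx) (w : EucSp ny) (R : ℝ), 1 ≤ R → ‖z‖ ≤ R →
      ‖g z w‖ ≤ Kg * R ^ L₁ * (1 + ‖w‖) ^ L₂)
    (hi : 1 ≤ i) (hiT : i ≤ T) :
    ∃ C : ℝ, ∃ N : ℕ, 1 ≤ C ∧ ∀ (u : ℝ → EucSp m) (y : ℕ → EucSp ny) (x : ℕ → ℝ → EucSp nx),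
      (∀ s ∈ Icc (0 : ℝ) T, ‖u s‖ ≤ ρ) → HybridModes T f g u y x₀ x →
      ∀ t ∈ Icc ((i : ℝ) - 1) i, ‖x i t‖ ≤ C * obsWeight y i ^ N := by
  set F₀ := ‖f 0 0‖ + K * ρ with hF₀_def
  have hF₀ : 0 ≤ F₀ := by positivity
  induction i, hi using Nat.le_induction with
  | base =>
    refine ⟨(‖x₀‖ + F₀ + 1) * Real.exp K, 0, one_le_mul_of_one_le_of_one_le
      (le_add_of_nonneg_left (add_nonneg (norm_nonneg _) hF₀)) (Real.one_le_exp hK), ?_⟩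
    intro u y x hub hx t ht
    have h := hx.norm_le_on_mode hK hρ hLip hub le_rfl hiT t ht
    rw [Nat.cast_one, sub_self, hx.1, ← hF₀_def] at h
    rw [pow_zero, mul_one]
    exact h.trans (mul_le_mul_of_nonneg_right (by linarith) (Real.exp_pos K).le)
  | succ i hi ih =>
    obtain ⟨C, N, hC, hCN⟩ := ih (Nat.le_of_succ_le hiT)
    have hKgC : 0 ≤ Kg * C ^ L₁ := mul_nonneg hKg (pow_nonneg (by linarith) _)
    refine ⟨(Kg * C ^ L₁ + F₀ + 1) * Real.exp K, N * L₁ + L₂, one_le_mul_of_one_le_of_one_le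
      (le_add_of_nonneg_left (add_nonneg hKgC hF₀)) (Real.one_le_exp hK), ?_⟩
    intro u y x hub hx t ht
    have hR : 1 ≤ C * obsWeight y i ^ N := one_le_mul_of_one_le_of_one_le hC
      (one_le_pow₀ (one_le_obsWeight y i))
    have hjump : ‖x (i + 1) i‖ ≤ Kg * C ^ L₁ * obsWeight y (i + 1) ^ (N * L₁ + L₂) := by
      rw [hx.2.2 i hi hiT]
      exact (hg _ _ _ hR (hCN u y x hub hx i ⟨by linarith, le_rfl⟩)).trans
        (jump_bound_le_obsWeight_succ y hi hKg (by linarith) N L₁ L₂)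
    have h := hx.norm_le_on_mode hK hρ hLip hub (by omega) hiT t ht
    rw [Nat.cast_succ, add_sub_cancel_right, ← hF₀_def] at h
    calc ‖x (i + 1) t‖ ≤ (‖x (i + 1) i‖ + F₀) * Real.exp K := h
      _ ≤ (Kg * C ^ L₁ + F₀) * obsWeight y (i + 1) ^ (N * L₁ + L₂) * Real.exp K := by
        gcongr
        exact (add_le_add hjump le_rfl).trans (mul_pow_add_le_add_mul_pow hKgC hF₀
          (one_le_obsWeight y (i + 1)) le_rfl)
      _ ≤ (Kg * C ^ L₁ + F₀ + 1) * Real.exp K * obsWeight y (i + 1) ^ (N * L₁ + L₂) := by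
        rw [mul_right_comm]
        gcongr ?_ * _ * _
        exacts [pow_nonneg (obsWeight_nonneg y _) _, by linarith]

theorem exists_hybridModes_norm_sub_le (hK : 0 ≤ K) (hρ : 0 ≤ ρ)
    (hf : Continuous fun p : EucSp nx × EucSp m => f p.1 p.2)
    (hLip : ∀ (x' x'' : EucSp nx) (u' u'' : EucSp m), ‖u'‖ ≤ ρ → ‖u''‖ ≤ ρ →
      ‖f x' u' - f x'' u''‖ ≤ K * (‖x' - x''‖ + ‖u' - u''‖))
    (hKg : 0 ≤ Kg) (hg : ∀ (z : EucSp nx) (w : EucSp ny) (R : ℝ), 1 ≤ R → ‖z‖ ≤ R →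
      ‖g z w‖ ≤ Kg * R ^ L₁ * (1 + ‖w‖) ^ L₂)
    (hg' : ∀ (z z' : EucSp nx) (w : EucSp ny) (R : ℝ), 1 ≤ R → ‖z‖ ≤ R → ‖z'‖ ≤ R →
      ‖g z' w - g z w‖ ≤ Kg * R ^ L₁ * (1 + ‖w‖) ^ L₂ * ‖z' - z‖)
    (hi : 1 ≤ i) (hiT : i ≤ T) :
    ∃ D : ℝ, ∃ M : ℕ, 0 ≤ D ∧ ∀ (u u' : ℝ → EucSp m) (y : ℕ → EucSp ny)
      (x x' : ℕ → ℝ → EucSp nx) (δ : ℝ),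
      AEStronglyMeasurable u (volume.restrict (Icc 0 (T : ℝ))) →
      AEStronglyMeasurable u' (volume.restrict (Icc 0 (T : ℝ))) →
      (∀ s ∈ Icc (0 : ℝ) T, ‖u s‖ ≤ ρ) → (∀ s ∈ Icc (0 : ℝ) T, ‖u' s‖ ≤ ρ) →
      (∀ a t : ℝ, 0 ≤ a → a ≤ t → t ≤ T → ∫ s in a..t, ‖u' s - u s‖ ≤ δ) →
      HybridModes T f g u y x₀ x → HybridModes T f g u' y x₀ x' →
      ∀ t ∈ Icc ((i : ℝ) - 1) i, ‖x' i t - x i t‖ ≤ δ * D * obsWeight y i ^ M := by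
  induction i, hi using Nat.le_induction with
  | base =>
    refine ⟨K * Real.exp K, 0, mul_nonneg hK (Real.exp_pos K).le, ?_⟩
    intro u u' y x x' δ hum hum' hub hub' hδ hx hx' t ht
    have h := hx.norm_sub_le_on_mode hK hf hLip hx' hum hum' hub hub' hδ le_rfl hiT t ht
    rw [Nat.cast_one, sub_self, hx.1, hx'.1, sub_self, norm_zero, zero_add] at h
    rw [pow_zero, mul_one]
    exact h.trans_eq (by ring)
  | succ i hi ih =>
    obtain ⟨D, M, hD, hDM⟩ := ih (Nat.le_of_succ_le hiT)
    obtain ⟨C, N, hC, hCN⟩ :=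
      exists_hybridModes_norm_le (x₀ := x₀) hK hρ hLip hKg hg hi (Nat.le_of_succ_le hiT)
    have hA : 0 ≤ Kg * C ^ L₁ * D := mul_nonneg (mul_nonneg hKg (pow_nonneg (by linarith) _)) hD
    refine ⟨(Kg * C ^ L₁ * D + K) * Real.exp K, N * L₁ + L₂ + M,
      mul_nonneg (add_nonneg hA hK) (Real.exp_pos K).le, ?_⟩
    intro u u' y x x' δ hum hum' hub hub' hδ hx hx' t ht
    have hδ0 : 0 ≤ δ := by simpa using hδ 0 0 le_rfl le_rfl (Nat.cast_nonneg T)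
    have hmem : (i : ℝ) ∈ Icc ((i : ℝ) - 1) i := ⟨by linarith, le_rfl⟩
    have hR : 1 ≤ C * obsWeight y i ^ N :=
      one_le_mul_of_one_le_of_one_le hC (one_le_pow₀ (one_le_obsWeight y i))
    have hjump : ‖x' (i + 1) i - x (i + 1) i‖ ≤
        δ * (Kg * C ^ L₁ * D) * obsWeight y (i + 1) ^ (N * L₁ + L₂ + M) := by
      rw [hx.2.2 i hi hiT, hx'.2.2 i hi hiT]
      calc _ ≤ Kg * (C * obsWeight y i ^ N) ^ L₁ * (1 + ‖y i‖) ^ L₂ * ‖x' i i - x i i‖ :=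
            hg' _ _ _ _ hR (hCN u y x hub hx i hmem) (hCN u' y x' hub' hx' i hmem)
        _ ≤ Kg * C ^ L₁ * obsWeight y (i + 1) ^ (N * L₁ + L₂) *
            (δ * D * obsWeight y (i + 1) ^ M) :=
          mul_le_mul (jump_bound_le_obsWeight_succ y hi hKg (by linarith) N L₁ L₂)
            ((hDM u u' y x x' δ hum hum' hub hub' hδ hx hx' i hmem).trans
              (by gcongr; exacts [obsWeight_nonneg y i, obsWeight_le_succ y hi]))
            (norm_nonneg _) (mul_nonneg (mul_nonneg hKg (pow_nonneg (by linarith) _))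
              (pow_nonneg (obsWeight_nonneg y _) _))
        _ = δ * (Kg * C ^ L₁ * D) * obsWeight y (i + 1) ^ (N * L₁ + L₂ + M) := by
          rw [pow_add _ (N * L₁ + L₂)]; ring
    have h := hx.norm_sub_le_on_mode hK hf hLip hx' hum hum' hub hub' hδ (by omega) hiT t ht
    rw [Nat.cast_succ, add_sub_cancel_right] at h
    calc ‖x' (i + 1) t - x (i + 1) t‖
        ≤ (‖x' (i + 1) i - x (i + 1) i‖ + K * δ) * Real.exp K := h
      _ ≤ δ * ((Kg * C ^ L₁ * D + K) * obsWeight y (i + 1) ^ (N * L₁ + L₂ + M)) *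
          Real.exp K := by
        gcongr
        calc _ ≤ δ * (Kg * C ^ L₁ * D) * obsWeight y (i + 1) ^ (N * L₁ + L₂ + M) + K * δ :=
              add_le_add hjump le_rfl
          _ = δ * (Kg * C ^ L₁ * D * obsWeight y (i + 1) ^ (N * L₁ + L₂ + M) + K) := by ring
          _ ≤ _ := by
            gcongr
            exact mul_pow_add_le_add_mul_pow hA hK (one_le_obsWeight y _) le_rfl
      _ = δ * ((Kg * C ^ L₁ * D + K) * Real.exp K) *
          obsWeight y (i + 1) ^ (N * L₁ + L₂ + M) := by ring

theorem exists_cost_perturb_sub_le (hK : 0 ≤ K) (hρ : 0 ≤ ρ)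
    (hf : Continuous fun p : EucSp nx × EucSp m => f p.1 p.2)
    (hLip : ∀ (x' x'' : EucSp nx) (u' u'' : EucSp m), ‖u'‖ ≤ ρ → ‖u''‖ ≤ ρ →
      ‖f x' u' - f x'' u''‖ ≤ K * (‖x' - x''‖ + ‖u' - u''‖))
    (hKg : 0 ≤ Kg) (hg : ∀ (z : EucSp nx) (w : EucSp ny) (R : ℝ), 1 ≤ R → ‖z‖ ≤ R →
      ‖g z w‖ ≤ Kg * R ^ L₁ * (1 + ‖w‖) ^ L₂)
    (hg' : ∀ (z z' : EucSp nx) (w : EucSp ny) (R : ℝ), 1 ≤ R → ‖z‖ ≤ R → ‖z'‖ ≤ R →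
      ‖g z' w - g z w‖ ≤ Kg * R ^ L₁ * (1 + ‖w‖) ^ L₂ * ‖z' - z‖)
    {c : EucSp nx → EucSp m → ℝ} {K₆ K₇ : ℝ} {L₃ : ℕ} (hK₆ : 0 ≤ K₆) (hK₇ : 0 ≤ K₇)
    (hcd : ∀ w : EucSp m, Differentiable ℝ fun z => c z w)
    (hc' : ∀ (z : EucSp nx) (w : EucSp m), ‖w‖ ≤ ρ →
      ‖fderiv ℝ (fun z => c z w) z‖ ≤ K₆ + K₇ * ‖z‖ ^ L₃)
    (hu : AdmissibleCtrl T ρ u) {τ : ℝ} {v : EucSp m} (hv : ‖v‖ ≤ ρ) (hi : 1 ≤ i)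
    (hiT : i ≤ T) :
    ∃ β : ℝ, ∃ N : ℕ, 0 < β ∧ ∀ (y : ℕ → EucSp ny) (x x' : ℕ → ℝ → EucSp nx) (ε : ℝ), 0 ≤ ε →
      HybridModes T f g u y x₀ x → HybridModes T f g (perturb u τ v ε) y x₀ x' →
      ∀ t ∈ Icc ((i : ℝ) - 1) i, τ < t →
        |c (x' i t) (perturb u τ v ε t) - c (x i t) (u t)| ≤ ε * β * obsWeight y i ^ N := by
  obtain ⟨C, N, hC, hCN⟩ := exists_hybridModes_norm_le (x₀ := x₀) hK hρ hLip hKg hg hi hiT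
  obtain ⟨D, M, hD, hDM⟩ :=
    exists_hybridModes_norm_sub_le (x₀ := x₀) hK hρ hf hLip hKg hg hg' hi hiT
  have hA : 0 ≤ K₇ * C ^ L₃ := mul_nonneg hK₇ (pow_nonneg (by linarith) _)
  have hβ : 0 ≤ 2 * ρ * (K₇ * C ^ L₃ + K₆) * D := by
    have := add_nonneg hA hK₆; positivity
  refine ⟨2 * ρ * (K₇ * C ^ L₃ + K₆) * D + 1, N * L₃ + M, by linarith, ?_⟩
  intro y x x' ε hε hx hx' t ht hτt
  obtain ⟨hupc, hub⟩ := hu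
  have hum := hupc.aestronglyMeasurable measurableSet_Icc
  have hub' : ∀ s ∈ Icc (0 : ℝ) T, ‖perturb u τ v ε s‖ ≤ ρ := fun s hs =>
    norm_perturb_le (hub s hs) hv
  have hdiff := hDM u _ y x x' _ hum hum.perturb hub hub'
    (fun a t ha hat htT => integral_norm_perturb_sub_le hε hv hat
      fun s hs => hub s ⟨ha.trans hs.1, hs.2.trans htT⟩) hx hx' t ht
  have hut : ‖u t‖ ≤ ρ := hub t (Icc_sub_one_subset_Icc_zero hi hiT ht)
  have hW := one_le_obsWeight y i
  rw [perturb_of_lt hτt, ← Real.norm_eq_abs]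
  calc ‖c (x' i t) (u t) - c (x i t) (u t)‖
      ≤ (K₆ + K₇ * (C * obsWeight y i ^ N) ^ L₃) * ‖x' i t - x i t‖ :=
        norm_image_sub_le_of_norm_fderiv_le_of_norm_le (hcd (u t))
          (fun z hz => (hc' z _ hut).trans (by gcongr))
          (hCN _ y x' hub' hx' t ht) (hCN u y x hub hx t ht)
    _ ≤ (K₇ * C ^ L₃ + K₆) * obsWeight y i ^ (N * L₃) * (2 * ρ * ε * D * obsWeight y i ^ M) := by
        refine mul_le_mul ?_ hdiff (norm_nonneg _) (mul_nonneg (add_nonneg hA hK₆)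
          (pow_nonneg (obsWeight_nonneg y i) _))
        rw [mul_pow, ← pow_mul, add_comm, ← mul_assoc]
        exact mul_pow_add_le_add_mul_pow hA hK₆ hW le_rfl
    _ = ε * (2 * ρ * (K₇ * C ^ L₃ + K₆) * D) * obsWeight y i ^ (N * L₃ + M) := by
        rw [pow_add]; ring
    _ ≤ ε * (2 * ρ * (K₇ * C ^ L₃ + K₆) * D + 1) * obsWeight y i ^ (N * L₃ + M) := by
        gcongr
        linarith

end Hybrid

theorem cost_difference_mean_value_bound_general {nx ny m : ℕ} (T : ℕ) (hT : 1 ≤ T)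
    (ρmax : ℝ) (hρ : 0 ≤ ρmax) (K₁ : ℝ) (hK₁ : 1 ≤ K₁)
    (K₂ K₃ K₄ K₅ : ℝ) (hK₂ : 0 ≤ K₂) (hK₃ : 0 ≤ K₃) (hK₄ : 0 ≤ K₄) (hK₅ : 0 ≤ K₅)
    (L₁ L₂ : ℕ)
    (K₆ K₇ : ℝ) (hK₆ : 0 ≤ K₆) (hK₇ : 0 ≤ K₇) (L₃ : ℕ)
    (f : EucSp nx → EucSp m → EucSp nx)
    (hf : ContDiff ℝ 1 fun p : EucSp nx × EucSp m => f p.1 p.2)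
    (hLip : ∀ (x' x'' : EucSp nx) (u' u'' : EucSp m), ‖u'‖ ≤ ρmax → ‖u''‖ ≤ ρmax →
      ‖f x' u' - f x'' u''‖ ≤ K₁ * (‖x' - x''‖ + ‖u' - u''‖))
    (g : EucSp nx → EucSp ny → EucSp nx)
    (hgd : ∀ yy : EucSp ny, Differentiable ℝ fun z => g z yy)
    (hgb : ∀ (z : EucSp nx) (yy : EucSp ny),
      ‖g z yy‖ ≤ K₂ + K₃ * ‖z‖ ^ L₁ + K₄ * ‖yy‖ ^ L₂ + K₅ * ‖z‖ ^ L₁ * ‖yy‖ ^ L₂ ∧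
      ‖fderiv ℝ (fun w => g w yy) z‖ ≤
        K₂ + K₃ * ‖z‖ ^ L₁ + K₄ * ‖yy‖ ^ L₂ + K₅ * ‖z‖ ^ L₁ * ‖yy‖ ^ L₂)
    (c : EucSp nx → EucSp m → ℝ)
    (hcx : ∀ uu : EucSp m, ContDiff ℝ 1 fun z => c z uu)
    (hcb : ∀ (z : EucSp nx) (uu : EucSp m), ‖uu‖ ≤ ρmax →
      |c z uu| ≤ K₆ + K₇ * ‖z‖ ^ L₃ ∧
      ‖fderiv ℝ (fun w => c w uu) z‖ ≤ K₆ + K₇ * ‖z‖ ^ L₃)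
    (u : ℝ → EucSp m) (hu : AdmissibleCtrl (T : ℝ) ρmax u)
    (τ : ℝ) (hτ : τ ∈ Set.Ioo (0 : ℝ) 1) (v : EucSp m) (hv : ‖v‖ ≤ ρmax)
    (x₀ : EucSp nx) :
    (∃ β₁ : ℝ, 0 < β₁ ∧
      ∀ (y : ℕ → EucSp ny) (x : ℕ → ℝ → EucSp nx) (X : ℝ → ℕ → ℝ → EucSp nx),
        HybridModes T f g u y x₀ x →
        (∀ ε ∈ Set.Icc (0 : ℝ) τ, HybridModes T f g (perturb u τ v ε) y x₀ (X ε)) →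
        ∀ ε ∈ Set.Icc (0 : ℝ) τ, ∀ t ∈ Set.Ioc τ 1,
          |c (X ε 1 t) (perturb u τ v ε t) - c (x 1 t) (u t)| ≤ ε * β₁) ∧
    ∀ i : ℕ, 2 ≤ i → i ≤ T →
      ∃ B : List ((ℕ → ℕ) × ℝ), (∀ p ∈ B, 0 < p.2) ∧
        ∀ (y : ℕ → EucSp ny) (x : ℕ → ℝ → EucSp nx) (X : ℝ → ℕ → ℝ → EucSp nx),
          HybridModes T f g u y x₀ x →
          (∀ ε ∈ Set.Icc (0 : ℝ) τ, HybridModes T f g (perturb u τ v ε) y x₀ (X ε)) →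
          ∀ ε ∈ Set.Icc (0 : ℝ) τ, ∀ t ∈ Set.Icc ((i : ℝ) - 1) (i : ℝ),
            |c (X ε i t) (perturb u τ v ε t) - c (x i t) (u t)| ≤
              ε * (B.map fun p =>
                p.2 * ∏ mm ∈ Finset.Icc 1 (i - 1), ‖y mm‖ ^ p.1 mm).sum := by
  have hK : 0 ≤ K₁ := by linarith
  have hKg : 0 ≤ K₂ + K₃ + K₄ + K₅ := by positivity
  have hg : ∀ (z : EucSp nx) (w : EucSp ny) (R : ℝ), 1 ≤ R → ‖z‖ ≤ R →
      ‖g z w‖ ≤ (K₂ + K₃ + K₄ + K₅) * R ^ L₁ * (1 + ‖w‖) ^ L₂ := fun z w R hR hz =>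
    (hgb z w).1.trans (add_mul_pow_add_le_mul_pow_mul_one_add_pow hK₂ hK₃ hK₄ hK₅
      (norm_nonneg z) hz hR (norm_nonneg w))
  have hg' : ∀ (z z' : EucSp nx) (w : EucSp ny) (R : ℝ), 1 ≤ R → ‖z‖ ≤ R → ‖z'‖ ≤ R →
      ‖g z' w - g z w‖ ≤ (K₂ + K₃ + K₄ + K₅) * R ^ L₁ * (1 + ‖w‖) ^ L₂ * ‖z' - z‖ :=
    fun z z' w R hR hz hz' => norm_image_sub_le_of_norm_fderiv_le_of_norm_le (hgd w)
      (fun ζ hζ => (hgb ζ w).2.trans (add_mul_pow_add_le_mul_pow_mul_one_add_pow hK₂ hK₃ hK₄ hK₅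
        (norm_nonneg ζ) hζ hR (norm_nonneg w))) hz' hz
  have hcost := fun i (hi : 1 ≤ i) (hiT : i ≤ T) =>
    exists_cost_perturb_sub_le (x₀ := x₀) (τ := τ) hK hρ hf.continuous hLip hKg hg hg' hK₆ hK₇
      (fun w => (hcx w).differentiable one_ne_zero) (fun z w hw => (hcb z w hw).2) hu hv hi hiT
  refine ⟨?_, fun i hi hiT => ?_⟩
  · obtain ⟨β, N, hβ, hbound⟩ := hcost 1 le_rfl hT
    refine ⟨β, hβ, fun y x X hx hX ε hε t ht => ?_⟩
    simpa [obsWeight_one] using hbound y x (X ε) ε hε.1 hx (hX ε hε) t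
      ⟨by simp; linarith [hτ.1, ht.1], by simpa using ht.2⟩ ht.1
  · obtain ⟨β, N, hβ, hbound⟩ := hcost i (by omega) hiT
    obtain ⟨B, hB, hBle⟩ := exists_list_mul_prod_one_add_pow_le (Finset.Icc 1 (i - 1)) hβ N
    refine ⟨B, hB, fun y x X hx hX ε hε t ht => ?_⟩
    have hτt : τ < t := by
      have : (2 : ℝ) ≤ i := by exact_mod_cast hi
      linarith [hτ.2, ht.1]
    have hIco : Finset.Ico 1 i = Finset.Icc 1 (i - 1) := by
      rw [← Finset.Ico_add_one_right_eq_Icc, Nat.sub_add_cancel (by omega)]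
    refine (hbound y x (X ε) ε hε.1 hx (hX ε hε) t ht hτt).trans ?_
    rw [mul_assoc, obsWeight, hIco]
    exact mul_le_mul_of_nonneg_left (hBle _ fun j _ => norm_nonneg _) hε.1

/-- Proposition 20: cost differences along the perturbed and nominal hybrid
trajectories are bounded, uniformly in `ε ∈ [0, τ]`, by `ε` times constants (for mode 1 on
`(τ, 1]`) resp. `ε` times a polynomial in the observation norms (for modes `i ∈ {2,…,T}`),
with constants independent of `ε`, of the perturbed control, and of the observations. -/
theorem cost_difference_mean_value_bound {nx ny m : ℕ} (T : ℕ) (hT : 1 ≤ T)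
    (ρmax : ℝ) (hρ : 0 ≤ ρmax) (K₁ : ℝ) (hK₁ : 1 ≤ K₁)
    (K₂ K₃ K₄ K₅ : ℝ) (hK₂ : 0 ≤ K₂) (hK₃ : 0 ≤ K₃) (hK₄ : 0 ≤ K₄) (hK₅ : 0 ≤ K₅)
    (L₁ L₂ : ℕ) (hL₁ : 0 < L₁) (hL₂ : 0 < L₂)
    (K₆ K₇ : ℝ) (hK₆ : 0 ≤ K₆) (hK₇ : 0 ≤ K₇) (L₃ : ℕ) (hL₃ : 0 < L₃)
    (f : EucSp nx → EucSp m → EucSp nx)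
    (hf : ContDiff ℝ 1 fun p : EucSp nx × EucSp m => f p.1 p.2)
    (hLip : ∀ (x' x'' : EucSp nx) (u' u'' : EucSp m), ‖u'‖ ≤ ρmax → ‖u''‖ ≤ ρmax →
      ‖f x' u' - f x'' u''‖ ≤ K₁ * (‖x' - x''‖ + ‖u' - u''‖))
    (g : EucSp nx → EucSp ny → EucSp nx)
    (hgc : Continuous fun p : EucSp nx × EucSp ny => g p.1 p.2)
    (hgd : ∀ yy : EucSp ny, Differentiable ℝ fun z => g z yy)
    (hgb : ∀ (z : EucSp nx) (yy : EucSp ny),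
      ‖g z yy‖ ≤ K₂ + K₃ * ‖z‖ ^ L₁ + K₄ * ‖yy‖ ^ L₂ + K₅ * ‖z‖ ^ L₁ * ‖yy‖ ^ L₂ ∧
      ‖fderiv ℝ (fun w => g w yy) z‖ ≤
        K₂ + K₃ * ‖z‖ ^ L₁ + K₄ * ‖yy‖ ^ L₂ + K₅ * ‖z‖ ^ L₁ * ‖yy‖ ^ L₂)
    (c : EucSp nx → EucSp m → ℝ)
    (hcc : Continuous fun p : EucSp nx × EucSp m => c p.1 p.2)
    (hcx : ∀ uu : EucSp m, ContDiff ℝ 1 fun z => c z uu)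
    (hcb : ∀ (z : EucSp nx) (uu : EucSp m), ‖uu‖ ≤ ρmax →
      |c z uu| ≤ K₆ + K₇ * ‖z‖ ^ L₃ ∧
      ‖fderiv ℝ (fun w => c w uu) z‖ ≤ K₆ + K₇ * ‖z‖ ^ L₃)
    (u : ℝ → EucSp m) (hu : AdmissibleCtrl (T : ℝ) ρmax u)
    (τ : ℝ) (hτ : τ ∈ Set.Ioo (0 : ℝ) 1) (v : EucSp m) (hv : ‖v‖ ≤ ρmax)
    (huτ : ContinuousWithinAt u (Set.Iic τ) τ)
    (x₀ : EucSp nx) :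
    (∃ β₁ : ℝ, 0 < β₁ ∧
      ∀ (y : ℕ → EucSp ny) (x : ℕ → ℝ → EucSp nx) (X : ℝ → ℕ → ℝ → EucSp nx),
        HybridModes T f g u y x₀ x →
        (∀ ε ∈ Set.Icc (0 : ℝ) τ, HybridModes T f g (perturb u τ v ε) y x₀ (X ε)) →
        ∀ ε ∈ Set.Icc (0 : ℝ) τ, ∀ t ∈ Set.Ioc τ 1,
          |c (X ε 1 t) (perturb u τ v ε t) - c (x 1 t) (u t)| ≤ ε * β₁) ∧
    ∀ i : ℕ, 2 ≤ i → i ≤ T →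
      ∃ B : List ((ℕ → ℕ) × ℝ), (∀ p ∈ B, 0 < p.2) ∧
        ∀ (y : ℕ → EucSp ny) (x : ℕ → ℝ → EucSp nx) (X : ℝ → ℕ → ℝ → EucSp nx),
          HybridModes T f g u y x₀ x →
          (∀ ε ∈ Set.Icc (0 : ℝ) τ, HybridModes T f g (perturb u τ v ε) y x₀ (X ε)) →
          ∀ ε ∈ Set.Icc (0 : ℝ) τ, ∀ t ∈ Set.Icc ((i : ℝ) - 1) (i : ℝ),
            |c (X ε i t) (perturb u τ v ε t) - c (x i t) (u t)| ≤
              ε * (B.map fun p =>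
                p.2 * ∏ mm ∈ Finset.Icc 1 (i - 1), ‖y mm‖ ^ p.1 mm).sum :=
  cost_difference_mean_value_bound_general T hT ρmax hρ K₁ hK₁ K₂ K₃ K₄ K₅ hK₂ hK₃ hK₄ hK₅ L₁ L₂ K₆
    K₇ hK₆ hK₇ L₃ f hf hLip g hgd hgb c hcx hcb u hu τ hτ v hv x₀
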